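/- arXiv:1806.04615 — 6 statements merged into one kernel-verified Lean document; each statement's English description precedes it below -/
import Mathlib

section
/- For fixed real numbers ν>0 and k≥1, the function A(x) = ((1+x²)/x^{1/k}) · e^{−νx} · ∫₀ˣ (x−h)^{1/k} · (h^{1/k}/(1+h²)) · e^{νh} · (dh/h) is bounded on (0,∞). -/
/-!
Write `r = 1 / k ∈ (0, 1]`. Since `(x - h) ^ r ≤ x ^ r`, the prefactor `x ^ (-r)` cancels, and
splitting at `h = 1 + x / 2` gives the pointwise bound
`h ^ (r - 1) e^{νh} / (1 + h²) ≤ e^{ν (1 + x/2)} h ^ (r - 1) + e^{νh} / (1 + x² / 4)`.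
Integrating, the first term contributes `e^ν (1 + x²) x ^ r e^{-νx/2} / r`, bounded because
`(1 + x²) x ^ r ≤ (1 + x)³` is dominated by `e^{νx/2}`, and the second at most `4 / ν`.
-/

open MeasureTheory Real

theorem rpow_le_one_add_self {x r : ℝ} (hx : 0 ≤ x) (hr0 : 0 ≤ r) (hr1 : r ≤ 1) :
    x ^ r ≤ 1 + x := by
  have := rpow_one_add_le_one_add_mul_self (s := x - 1) (by linarith) hr0 hr1
  rw [add_sub_cancel] at this
  nlinarith

theorem one_add_pow_le_mul_exp {c x : ℝ} (hc : 0 < c) (hx : 0 ≤ x) (n : ℕ) :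
    (1 + x) ^ n ≤ (1 + n / c) ^ n * exp (c * x) := by
  rcases n.eq_zero_or_pos with rfl | hn
  · simpa using one_le_exp (by positivity)
  have hn' : (0 : ℝ) < n := by exact_mod_cast hn
  have hlin : 1 + x ≤ (1 + n / c) * exp (c * x / n) := calc
    1 + x ≤ (1 + n / c) * (c * x / n + 1) := by
      field_simp
      nlinarith [mul_nonneg hc.le hx, mul_nonneg hn'.le hx]
    _ ≤ (1 + n / c) * exp (c * x / n) := by gcongr; exact add_one_le_exp _
  calc (1 + x) ^ n ≤ ((1 + n / c) * exp (c * x / n)) ^ n := by gcongr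
    _ = (1 + n / c) ^ n * exp (c * x) := by
      rw [mul_pow, ← exp_nat_mul, mul_div_cancel₀ _ hn'.ne']

theorem integrableOn_Ioo_rpow_sub_one {r x : ℝ} (hr : 0 < r) (hx : 0 < x) :
    IntegrableOn (fun h : ℝ => h ^ (r - 1)) (Set.Ioo 0 x) := by
  have := intervalIntegral.intervalIntegrable_rpow' (a := 0) (b := x) (r := r - 1)
    (by linarith)
  rw [intervalIntegrable_iff_integrableOn_Ioc_of_le hx.le] at this
  exact this.mono_set Set.Ioo_subset_Ioc_self

theorem integral_Ioo_rpow_sub_one {r x : ℝ} (hr : 0 < r) (hx : 0 < x) :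
    ∫ h in Set.Ioo 0 x, h ^ (r - 1) = x ^ r / r := by
  rw [← integral_Ioc_eq_integral_Ioo, ← intervalIntegral.integral_of_le hx.le,
    integral_rpow (Or.inl (by linarith)), sub_add_cancel, zero_rpow hr.ne', sub_zero]

theorem integrableOn_Ioo_exp_mul (ν x : ℝ) :
    IntegrableOn (fun h : ℝ => exp (ν * h)) (Set.Ioo 0 x) :=
  (continuous_exp.comp (continuous_const_mul ν)).integrableOn_Icc.mono_set
    Set.Ioo_subset_Icc_self

theorem integral_Ioo_exp_mul {ν x : ℝ} (hν : ν ≠ 0) (hx : 0 ≤ x) :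
    ∫ h in Set.Ioo 0 x, exp (ν * h) = (exp (ν * x) - 1) / ν := by
  rw [← integral_Ioc_eq_integral_Ioo, ← intervalIntegral.integral_of_le hx,
    intervalIntegral.integral_comp_mul_left (fun h => exp h) hν, integral_exp, mul_zero,
    exp_zero, smul_eq_mul, inv_mul_eq_div]

theorem rpow_sub_one_mul_exp_div_le {ν r x h : ℝ} (hν : 0 ≤ ν) (hr : r ≤ 1) (hx : 0 ≤ x)
    (hh : 0 < h) :
    h ^ (r - 1) * exp (ν * h) / (1 + h ^ 2) ≤
      exp (ν * (1 + x / 2)) * h ^ (r - 1) + exp (ν * h) / (1 + (x / 2) ^ 2) := by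
  rcases le_or_gt h (1 + x / 2) with hle | hgt
  · have hexp : exp (ν * h) ≤ exp (ν * (1 + x / 2)) := exp_le_exp.mpr (by gcongr)
    calc h ^ (r - 1) * exp (ν * h) / (1 + h ^ 2)
        ≤ h ^ (r - 1) * exp (ν * (1 + x / 2)) / 1 := by gcongr; nlinarith
      _ ≤ exp (ν * (1 + x / 2)) * h ^ (r - 1) + exp (ν * h) / (1 + (x / 2) ^ 2) := by
        rw [div_one, mul_comm]; exact le_add_of_nonneg_right (by positivity)
  · have hpow : h ^ (r - 1) ≤ 1 := rpow_le_one_of_one_le_of_nonpos (by linarith) (by linarith)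
    calc h ^ (r - 1) * exp (ν * h) / (1 + h ^ 2)
        ≤ 1 * exp (ν * h) / (1 + (x / 2) ^ 2) := by gcongr; linarith
      _ ≤ exp (ν * (1 + x / 2)) * h ^ (r - 1) + exp (ν * h) / (1 + (x / 2) ^ 2) := by
        rw [one_mul]; exact le_add_of_nonneg_left (by positivity)

/-- `A ν (1 / k) x` is the paper's `A(x)`. -/
noncomputable def A (ν r x : ℝ) : ℝ :=
  ((1 + x ^ 2) / x ^ r) * exp (-ν * x) *
    ∫ h in Set.Ioo (0 : ℝ) x, (x - h) ^ r * (h ^ r / (1 + h ^ 2)) * exp (ν * h) / h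

theorem A_integral_le {ν r x : ℝ} (hν : 0 < ν) (hr0 : 0 < r) (hr1 : r ≤ 1) (hx : 0 < x) :
    ∫ h in Set.Ioo (0 : ℝ) x, (x - h) ^ r * (h ^ r / (1 + h ^ 2)) * exp (ν * h) / h ≤
      x ^ r * (exp (ν * (1 + x / 2)) * (x ^ r / r) +
        (exp (ν * x) - 1) / ν / (1 + (x / 2) ^ 2)) := by
  have hbound_int : IntegrableOn (fun h => exp (ν * (1 + x / 2)) * h ^ (r - 1) +
      exp (ν * h) / (1 + (x / 2) ^ 2)) (Set.Ioo 0 x) :=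
    ((integrableOn_Ioo_rpow_sub_one hr0 hx).const_mul _).add
      ((integrableOn_Ioo_exp_mul ν x).div_const _)
  calc _ ≤ ∫ h in Set.Ioo (0 : ℝ) x, x ^ r * (exp (ν * (1 + x / 2)) * h ^ (r - 1) +
          exp (ν * h) / (1 + (x / 2) ^ 2)) := by
        refine integral_mono_of_nonneg ?_ (hbound_int.const_mul _) ?_
        all_goals
          refine (ae_restrict_iff' measurableSet_Ioo).mpr (.of_forall fun h ⟨h0, hhx⟩ => ?_)
          have hxh : 0 ≤ x - h := by linarith
        · positivity
        · calc (x - h) ^ r * (h ^ r / (1 + h ^ 2)) * exp (ν * h) / h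
              = (x - h) ^ r * (h ^ (r - 1) * exp (ν * h) / (1 + h ^ 2)) := by
                rw [rpow_sub_one h0.ne']; field_simp
            _ ≤ _ := mul_le_mul (rpow_le_rpow hxh (by linarith) hr0.le)
                (rpow_sub_one_mul_exp_div_le hν.le hr1 hx.le h0) (by positivity) (by positivity)
      _ = _ := by
        rw [integral_const_mul, integral_add ((integrableOn_Ioo_rpow_sub_one hr0 hx).const_mul _)
          ((integrableOn_Ioo_exp_mul ν x).div_const _), integral_const_mul, integral_div,
          integral_Ioo_rpow_sub_one hr0 hx, integral_Ioo_exp_mul hν.ne' hx.le]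

theorem one_add_sq_mul_rpow_le_exp {ν r x : ℝ} (hν : 0 < ν) (hr0 : 0 ≤ r) (hr1 : r ≤ 1)
    (hx : 0 ≤ x) : (1 + x ^ 2) * x ^ r ≤ (1 + 6 / ν) ^ 3 * exp (ν / 2 * x) := calc
  (1 + x ^ 2) * x ^ r ≤ (1 + x) ^ 3 := by
    have := rpow_le_one_add_self hx hr0 hr1
    nlinarith [mul_le_mul_of_nonneg_left this (by positivity : 0 ≤ 1 + x ^ 2)]
  _ ≤ (1 + 6 / ν) ^ 3 * exp (ν / 2 * x) := by
    convert one_add_pow_le_mul_exp (half_pos hν) hx 3 using 3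
    push_cast; ring

theorem A_le {ν r x : ℝ} (hν : 0 < ν) (hr0 : 0 < r) (hr1 : r ≤ 1) (hx : 0 < x) :
    A ν r x ≤ exp ν * (1 + 6 / ν) ^ 3 / r + 4 / ν := by
  have hxr : 0 < x ^ r := rpow_pos_of_pos hx r
  have hpoly := one_add_sq_mul_rpow_le_exp hν hr0.le hr1 hx.le
  have hdecay : exp (-(ν / 2 * x)) = exp (-ν * x) * exp (ν * (1 + x / 2)) / exp ν := by
    rw [eq_div_iff (exp_pos ν).ne', ← exp_add, ← exp_add]; ring_nf
  have hratio : (1 + x ^ 2) / (1 + (x / 2) ^ 2) ≤ 4 := by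
    rw [div_le_iff₀ (by positivity)]; nlinarith
  have hsat : exp (-ν * x) * (exp (ν * x) - 1) ≤ 1 := by
    rw [mul_sub, ← exp_add, neg_mul, neg_add_cancel, exp_zero, mul_one]
    linarith [exp_pos (-(ν * x))]
  calc A ν r x ≤ (1 + x ^ 2) / x ^ r * exp (-ν * x) * (x ^ r * (exp (ν * (1 + x / 2)) *
        (x ^ r / r) + (exp (ν * x) - 1) / ν / (1 + (x / 2) ^ 2))) :=
        mul_le_mul_of_nonneg_left (A_integral_le hν hr0 hr1 hx) (by positivity)
    _ = exp ν * ((1 + x ^ 2) * x ^ r * exp (-(ν / 2 * x))) / r +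
        (1 + x ^ 2) / (1 + (x / 2) ^ 2) * (exp (-ν * x) * (exp (ν * x) - 1)) / ν := by
        rw [hdecay]; field_simp
    _ ≤ exp ν * (1 + 6 / ν) ^ 3 / r + 4 * 1 / ν := by
        gcongr
        · rw [← le_div_iff₀ (exp_pos _), exp_neg, div_inv_eq_mul]; exact hpoly
        · exact mul_nonneg (exp_pos _).le (sub_nonneg.mpr (one_le_exp (by positivity)))
    _ = exp ν * (1 + 6 / ν) ^ 3 / r + 4 / ν := by rw [mul_one]

/-- For fixed `ν > 0` and integer `k ≥ 1`, the function
`A(x) = ((1+x²)/x^{1/k}) e^{−νx} ∫₀ˣ (x−h)^{1/k} (h^{1/k}/(1+h²)) e^{νh} dh/h`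
is bounded on `(0,∞)`. -/
theorem boundedness_of_A (ν : ℝ) (hν : 0 < ν) (k : ℕ) (hk : 1 ≤ k) :
    ∃ C : ℝ, ∀ x : ℝ, 0 < x →
      ((1 + x ^ 2) / x ^ ((1 : ℝ) / k)) * Real.exp (-ν * x) *
        ∫ h in Set.Ioo (0 : ℝ) x,
          (x - h) ^ ((1 : ℝ) / k) * (h ^ ((1 : ℝ) / k) / (1 + h ^ 2)) *
            Real.exp (ν * h) / h ≤ C := by
  have hk' : (1 : ℝ) ≤ k := by exact_mod_cast hk
  have hr0 : 0 < (1 : ℝ) / k := by positivity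
  have hr1 : (1 : ℝ) / k ≤ 1 := (div_le_one (by positivity)).mpr hk'
  exact ⟨_, fun x hx => A_le hν hr0 hr1 hx⟩
end

section
/- If f, g ∈ E_{(β,μ)} with β > 0 and μ > 1, then the convolution f ∗ g(m) = ∫_{−∞}^{∞} f(m−m₁) g(m₁) dm₁ is well-defined for every m ∈ ℝ and belongs to E_{(β,μ)}. -/
open MeasureTheory Real

noncomputable def Enorm (β μ : ℝ) (h : ℝ → ℂ) : ℝ :=
  ⨆ m : ℝ, (1 + |m|) ^ μ * Real.exp (β * |m|) * ‖h m‖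

def memE (β μ : ℝ) (h : ℝ → ℂ) : Prop :=
  Continuous h ∧ BddAbove (Set.range fun m : ℝ =>
    (1 + |m|) ^ μ * Real.exp (β * |m|) * ‖h m‖)

/-! With `w(m) = (1 + |m|)^μ e^{β|m|}` one has
`w(m) ≤ 2^μ ((1 + |m - t|)^{-μ} + (1 + |t|)^{-μ}) w(m - t) w(t)`, so `w(m) |f(m - t) g(t)|` is
dominated, uniformly in `m`, by a multiple of `(1 + |m - t|)^{-μ} + (1 + |t|)^{-μ}`, whose integral
in `t` is finite for `μ > 1` and independent of `m`. Continuity of `f ∗ g` holds because `f` is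
bounded and continuous and `g` is integrable. -/

noncomputable def weightE {E : Type*} [SeminormedAddCommGroup E] (β μ : ℝ) (x : E) : ℝ :=
  (1 + ‖x‖) ^ μ * exp (β * ‖x‖)

theorem memE_iff {β μ : ℝ} {h : ℝ → ℂ} :
    memE β μ h ↔ Continuous h ∧ ∃ C, ∀ x, weightE β μ x * ‖h x‖ ≤ C := by
  simp only [memE, weightE, Real.norm_eq_abs, bddAbove_def, Set.forall_mem_range]

section Weight

variable {E : Type*} [SeminormedAddCommGroup E] {β μ : ℝ}

theorem weightE_pos (β μ : ℝ) (x : E) : 0 < weightE β μ x := by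
  unfold weightE
  positivity

theorem one_add_norm_add_rpow_le (hμ : 0 ≤ μ) (x y : E) :
    (1 + ‖x + y‖) ^ μ ≤ 2 ^ μ * ((1 + ‖x‖) ^ μ + (1 + ‖y‖) ^ μ) := by
  have hmax : 1 + ‖x + y‖ ≤ 2 * max (1 + ‖x‖) (1 + ‖y‖) := by
    linarith [norm_add_le x y, le_max_left (1 + ‖x‖) (1 + ‖y‖),
      le_max_right (1 + ‖x‖) (1 + ‖y‖)]
  calc (1 + ‖x + y‖) ^ μ ≤ (2 * max (1 + ‖x‖) (1 + ‖y‖)) ^ μ := by gcongr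
    _ = 2 ^ μ * max ((1 + ‖x‖) ^ μ) ((1 + ‖y‖) ^ μ) := by
      rw [mul_rpow zero_le_two (by positivity), rpow_max (by positivity) (by positivity) hμ]
    _ ≤ 2 ^ μ * ((1 + ‖x‖) ^ μ + (1 + ‖y‖) ^ μ) := by
      gcongr
      exact max_le_add_of_nonneg (by positivity) (by positivity)

theorem exp_mul_norm_add_le (hβ : 0 ≤ β) (x y : E) :
    exp (β * ‖x + y‖) ≤ exp (β * ‖x‖) * exp (β * ‖y‖) := by
  rw [← exp_add, ← mul_add]
  gcongr
  exact norm_add_le x y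

theorem weightE_add_le (hβ : 0 ≤ β) (hμ : 0 ≤ μ) (x y : E) :
    weightE β μ (x + y) ≤
      2 ^ μ * ((1 + ‖x‖) ^ (-μ) + (1 + ‖y‖) ^ (-μ)) * (weightE β μ x * weightE β μ y) := by
  have hsum : (1 + ‖x‖) ^ μ + (1 + ‖y‖) ^ μ =
      ((1 + ‖x‖) ^ (-μ) + (1 + ‖y‖) ^ (-μ)) * ((1 + ‖x‖) ^ μ * (1 + ‖y‖) ^ μ) := by
    rw [rpow_neg (by positivity), rpow_neg (by positivity)]
    field_simp
    ring
  calc weightE β μ (x + y)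
      ≤ 2 ^ μ * ((1 + ‖x‖) ^ μ + (1 + ‖y‖) ^ μ) * (exp (β * ‖x‖) * exp (β * ‖y‖)) := by
        unfold weightE
        gcongr
        exacts [one_add_norm_add_rpow_le hμ x y, exp_mul_norm_add_le hβ x y]
    _ = _ := by rw [hsum, weightE, weightE]; ring

theorem norm_le_of_weightE_mul_norm_le {F : Type*} [SeminormedAddGroup F] {C : ℝ} {x : E}
    {v : F} (hβ : 0 ≤ β) (h : weightE β μ x * ‖v‖ ≤ C) : ‖v‖ ≤ C * (1 + ‖x‖) ^ (-μ) := by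
  have hpos : 0 < (1 + ‖x‖) ^ μ := by positivity
  rw [rpow_neg (by positivity), ← div_eq_mul_inv, le_div_iff₀ hpos]
  calc ‖v‖ * (1 + ‖x‖) ^ μ ≤ ‖v‖ * weightE β μ x := by
        unfold weightE
        gcongr
        exact le_mul_of_one_le_right hpos.le (one_le_exp (by positivity))
    _ ≤ C := by rw [mul_comm]; exact h

theorem weightE_mul_norm_mul_le {R : Type*} [SeminormedRing R] {f g : E → R} {Cf Cg : ℝ}
    (hβ : 0 ≤ β) (hμ : 0 ≤ μ) (hf : ∀ x, weightE β μ x * ‖f x‖ ≤ Cf)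
    (hg : ∀ x, weightE β μ x * ‖g x‖ ≤ Cg) (m t : E) :
    weightE β μ m * ‖f (m - t) * g t‖ ≤
      2 ^ μ * Cf * Cg * ((1 + ‖m - t‖) ^ (-μ) + (1 + ‖t‖) ^ (-μ)) := by
  have hCf : 0 ≤ Cf := (mul_nonneg (weightE_pos β μ 0).le (norm_nonneg _)).trans (hf 0)
  have hweight := weightE_add_le hβ hμ (m - t) t
  rw [sub_add_cancel] at hweight
  calc weightE β μ m * ‖f (m - t) * g t‖
      ≤ 2 ^ μ * ((1 + ‖m - t‖) ^ (-μ) + (1 + ‖t‖) ^ (-μ)) *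
          (weightE β μ (m - t) * weightE β μ t) * (‖f (m - t)‖ * ‖g t‖) :=
        mul_le_mul hweight (norm_mul_le _ _) (norm_nonneg _) ((weightE_pos β μ m).le.trans hweight)
    _ = 2 ^ μ * ((1 + ‖m - t‖) ^ (-μ) + (1 + ‖t‖) ^ (-μ)) *
          ((weightE β μ (m - t) * ‖f (m - t)‖) * (weightE β μ t * ‖g t‖)) := by ring
    _ ≤ 2 ^ μ * ((1 + ‖m - t‖) ^ (-μ) + (1 + ‖t‖) ^ (-μ)) * (Cf * Cg) := by
        gcongr
        · exact mul_nonneg (weightE_pos β μ _).le (norm_nonneg _)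
        exacts [hf _, hg _]
    _ = _ := by ring

end Weight

section Convolution

variable {β μ : ℝ} {f g : ℝ → ℂ}

theorem weightE_mul_norm_integral_le {Cf Cg : ℝ} (hβ : 0 ≤ β) (hμ : 1 < μ)
    (hf : ∀ x, weightE β μ x * ‖f x‖ ≤ Cf) (hg : ∀ x, weightE β μ x * ‖g x‖ ≤ Cg) {m : ℝ}
    (hint : Integrable (fun t => f (m - t) * g t)) :
    weightE β μ m * ‖∫ t, f (m - t) * g t‖ ≤
      2 ^ μ * Cf * Cg * (2 * ∫ t : ℝ, (1 + ‖t‖) ^ (-μ)) := by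
  have hK : Integrable (fun t : ℝ => (1 + ‖t‖) ^ (-μ)) :=
    integrable_one_add_norm (by simpa using hμ)
  calc weightE β μ m * ‖∫ t, f (m - t) * g t‖
      ≤ weightE β μ m * ∫ t, ‖f (m - t) * g t‖ := by
        gcongr
        · exact (weightE_pos β μ m).le
        exact norm_integral_le_integral_norm _
    _ = ∫ t, weightE β μ m * ‖f (m - t) * g t‖ := (integral_const_mul _ _).symm
    _ ≤ ∫ t, 2 ^ μ * Cf * Cg * ((1 + ‖m - t‖) ^ (-μ) + (1 + ‖t‖) ^ (-μ)) :=
        integral_mono (hint.norm.const_mul _) (((hK.comp_sub_left m).add hK).const_mul _)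
          fun t => weightE_mul_norm_mul_le hβ (by linarith) hf hg m t
    _ = _ := by
        rw [integral_const_mul, integral_add (hK.comp_sub_left m) hK,
          integral_sub_left_eq_self (fun t : ℝ => (1 + ‖t‖) ^ (-μ)) volume m]
        ring

theorem memE.integrable (hβ : 0 ≤ β) (hμ : 1 < μ) (hf : memE β μ f) : Integrable f := by
  obtain ⟨hfc, C, hC⟩ := memE_iff.mp hf
  have hK : Integrable (fun t : ℝ => (1 + ‖t‖) ^ (-μ)) :=
    integrable_one_add_norm (by simpa using hμ)
  exact (hK.const_mul C).mono' hfc.aestronglyMeasurable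
    (ae_of_all _ fun x => norm_le_of_weightE_mul_norm_le hβ (hC x))

theorem memE.bddAbove_norm (hβ : 0 ≤ β) (hμ : 0 ≤ μ) (hf : memE β μ f) :
    BddAbove (Set.range fun x => ‖f x‖) := by
  obtain ⟨-, C, hC⟩ := memE_iff.mp hf
  refine ⟨C, Set.forall_mem_range.mpr fun x => ?_⟩
  have hC0 : 0 ≤ C := (mul_nonneg (weightE_pos β μ x).le (norm_nonneg _)).trans (hC x)
  calc ‖f x‖ ≤ C * (1 + ‖x‖) ^ (-μ) := norm_le_of_weightE_mul_norm_le hβ (hC x)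
    _ ≤ C * 1 := by
        gcongr
        exact rpow_le_one_of_one_le_of_nonpos (by simp) (by linarith)
    _ = C := mul_one C

end Convolution

/-- If `f, g ∈ E_{(β,μ)}` with `β > 0`, `μ > 1`, the convolution
`f ∗ g (m) = ∫ f(m−m₁) g(m₁) dm₁` is well defined for every `m`
and belongs to `E_{(β,μ)}`. -/
theorem convolution_mem_E (β μ : ℝ) (hβ : 0 < β) (hμ : 1 < μ)
    (f g : ℝ → ℂ) (hf : memE β μ f) (hg : memE β μ g) :
    (∀ m : ℝ, Integrable (fun m₁ : ℝ => f (m - m₁) * g m₁)) ∧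
      memE β μ (fun m => ∫ m₁ : ℝ, f (m - m₁) * g m₁) := by
  have hg_int := hg.integrable hβ.le hμ
  have hf_bdd := hf.bddAbove_norm hβ.le (by linarith)
  have hint : ∀ m : ℝ, Integrable (fun t => f (m - t) * g t) := fun m =>
    hg_int.bdd_mul (hf.1.comp (continuous_sub_left m)).aestronglyMeasurable
      (ae_of_all _ fun t => hf_bdd.choose_spec (Set.mem_range_self (m - t)))
  have hcont : Continuous fun m => ∫ t, f (m - t) * g t := by
    convert hf_bdd.continuous_convolution_left_of_integrable (ContinuousLinearMap.mul ℂ ℂ)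
      hf.1 hg_int using 1
    exact funext fun m => convolution_mul_swap.symm
  obtain ⟨-, Cf, hCf⟩ := memE_iff.mp hf
  obtain ⟨-, Cg, hCg⟩ := memE_iff.mp hg
  exact ⟨hint, memE_iff.mpr
    ⟨hcont, _, fun m => weightE_mul_norm_integral_le hβ.le hμ hCf hCg (hint m)⟩⟩
end

section
/- Let Q₁, Q₂, R ∈ ℂ[X] with deg(R) ≥ deg(Q₁), deg(R) ≥ deg(Q₂), and R(im) ≠ 0 for all m ∈ ℝ. If μ > max(deg(Q₁)+1, deg(Q₂)+1), then there exists a constant C₅ > 0 such that for all f, g ∈ E_{(β,μ)}, the function m ↦ (1/R(im)) ∫_{−∞}^{∞} Q₁(i(m−m₁)) f(m−m₁) Q₂(im₁) g(m₁) dm₁ belongs to E_{(β,μ)} and its norm is at most C₅ ‖f‖_{(β,μ)} ‖g‖_{(β,μ)}. -/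
open MeasureTheory Real Complex Polynomial

/-!
With `φ₁ y = Q₁(iy) f(y)` and `φ₂ y = Q₂(iy) g(y)` the integral is the convolution `φ₁ ⋆ φ₂`.
Since `‖Q(iy)‖ ≲ (1 + |y|) ^ deg Q`, each `φⱼ` is bounded by a multiple of
`(1 + |y|) ^ (-pⱼ) * exp (-β |y|)` with `pⱼ = μ - deg Qⱼ > 1`. In the convolution the
exponential factors recombine through `|m| ≤ |m - x| + |x|`, and the polynomial ones through
the splitting "`|m - x| ≥ |m| / 2` or `|x| ≥ |m| / 2`", so that
`‖(φ₁ ⋆ φ₂) m‖ ≲ (1 + |m|) ^ (-min p₁ p₂) * exp (-β |m|)`. As `R` has no zero on `iℝ`,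
comparing it with its leading term at infinity gives `‖R(im)‖ ≳ (1 + |m|) ^ deg R`, and
`μ - min p₁ p₂ = max (deg Q₁) (deg Q₂) ≤ deg R`. Continuity holds because `φ₁` is bounded and
continuous and `φ₂` is integrable.
-/

open Asymptotics Bornology Filter
open scoped Convolution

lemma Asymptotics.IsBigO.isBigO_top_of_continuous {D E F : Type*} [TopologicalSpace D]
    [SeminormedAddCommGroup E] [NormedAddCommGroup F] {f : D → E} {g : D → F}
    (h : f =O[cocompact D] g) (hf : Continuous f) (hg : Continuous g) (hg₀ : ∀ x, g x ≠ 0) :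
    f =O[⊤] g := by
  obtain ⟨c, -, hc⟩ := h.exists_pos
  have hratio : Continuous fun x => ‖f x‖ / ‖g x‖ :=
    hf.norm.div hg.norm fun x => norm_ne_zero_iff.mpr (hg₀ x)
  have hO : (fun x => ‖f x‖ / ‖g x‖) =O[cocompact D] (1 : D → ℝ) := by
    refine IsBigO.of_bound c (hc.bound.mono fun x hx => ?_)
    rw [Pi.one_apply, norm_one, mul_one, Real.norm_eq_abs, abs_div, abs_norm, abs_norm,
      div_le_iff₀ (norm_pos_iff.mpr (hg₀ x))]
    exact hx
  obtain ⟨C, hC⟩ := isBounded_iff_forall_norm_le.mp (hratio.isBounded_range_iff_isBigO.mpr hO)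
  refine isBigO_top.mpr ⟨C, fun x => ?_⟩
  have := hC _ ⟨x, rfl⟩
  rwa [Real.norm_eq_abs, abs_div, abs_norm, abs_norm,
    div_le_iff₀ (norm_pos_iff.mpr (hg₀ x))] at this

lemma tendsto_I_mul_cobounded :
    Tendsto (fun m : ℝ => I * (m : ℂ)) (cobounded ℝ) (cobounded ℂ) := by
  rw [← tendsto_norm_atTop_iff_cobounded]
  simp only [norm_mul, norm_I, one_mul, Complex.norm_real]
  exact tendsto_norm_cobounded_atTop

lemma continuous_one_add_abs_rpow {d : ℝ} (hd : 0 ≤ d) :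
    Continuous fun m : ℝ => (1 + |m|) ^ d :=
  (continuous_const.add continuous_abs).rpow_const fun _ => Or.inr hd

lemma Polynomial.exists_norm_eval_I_mul_le (Q : ℂ[X]) :
    ∃ c > 0, ∀ m : ℝ, ‖Q.eval (I * m)‖ ≤ c * (1 + |m|) ^ (Q.natDegree : ℝ) := by
  have hmonomial : (fun m : ℝ => Q.eval (I * m)) =O[cocompact ℝ]
      fun m : ℝ => (I * m) ^ Q.natDegree := by
    have := isBigO_cobounded_of_degree_le (P := Q) (Q := X ^ Q.natDegree) (by
      rw [degree_X_pow]; exact degree_le_natDegree)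
    simp only [eval_pow, eval_X] at this
    rw [← Metric.cobounded_eq_cocompact]
    exact this.comp_tendsto tendsto_I_mul_cobounded
  have hweight : (fun m : ℝ => (I * m) ^ Q.natDegree) =O[⊤]
      fun m : ℝ => (1 + |m|) ^ (Q.natDegree : ℝ) := by
    refine IsBigO.of_bound 1 (Eventually.of_forall fun m => ?_)
    rw [Real.rpow_natCast, norm_pow, norm_mul, norm_I, one_mul, Complex.norm_real,
      Real.norm_eq_abs, Real.norm_eq_abs, one_mul, abs_pow,
      abs_of_pos (by positivity : (0:ℝ) < 1 + |m|)]
    exact pow_le_pow_left₀ (abs_nonneg _) (by simp) _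
  obtain ⟨c, hc, h⟩ := ((hmonomial.trans (hweight.mono le_top)).isBigO_top_of_continuous
    (by fun_prop) (continuous_one_add_abs_rpow (Nat.cast_nonneg _))
    fun m => by positivity).exists_pos
  refine ⟨c, hc, fun m => ?_⟩
  have := isBigOWith_top.mp h m
  rwa [Real.norm_eq_abs, abs_of_pos (by positivity)] at this

lemma Polynomial.exists_one_add_abs_rpow_le_norm_eval_I_mul {R : ℂ[X]}
    (hR : ∀ m : ℝ, R.eval (I * m) ≠ 0) :
    ∃ c > 0, ∀ m : ℝ, (1 + |m|) ^ (R.natDegree : ℝ) ≤ c * ‖R.eval (I * m)‖ := by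
  have hR₀ : R.leadingCoeff ≠ 0 := leadingCoeff_ne_zero.mpr fun h => hR 0 (by simp [h])
  have hweight : (fun m : ℝ => (1 + |m|) ^ (R.natDegree : ℝ)) =O[cobounded ℝ]
      fun m : ℝ => (I * m) ^ R.natDegree := by
    simp only [Real.rpow_natCast]
    refine IsBigO.pow (IsBigO.of_bound 2 ?_) _
    filter_upwards [tendsto_norm_cobounded_atTop.eventually_ge_atTop 1] with m hm
    rw [norm_mul, norm_I, one_mul, Complex.norm_real, Real.norm_eq_abs,
      abs_of_pos (by positivity : (0:ℝ) < 1 + |m|)]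
    rw [Real.norm_eq_abs] at hm ⊢
    linarith
  have hmonomial : (fun m : ℝ => (I * m) ^ R.natDegree) =O[cobounded ℝ]
      fun m : ℝ => R.eval (I * m) := by
    have := ((isBigO_refl (· ^ R.natDegree) _).const_mul_right hR₀).trans
      isEquivalent_cobounded_leading_monomial.symm.isBigO
    exact this.comp_tendsto tendsto_I_mul_cobounded
  rw [Metric.cobounded_eq_cocompact] at hweight hmonomial
  obtain ⟨c, hc, h⟩ := ((hweight.trans hmonomial).isBigO_top_of_continuous
    (continuous_one_add_abs_rpow (Nat.cast_nonneg _)) (by fun_prop) hR).exists_pos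
  refine ⟨c, hc, fun m => ?_⟩
  have := isBigOWith_top.mp h m
  rwa [Real.norm_eq_abs, abs_of_pos (by positivity)] at this

/-- The weight of `E_{(β,μ)}`: `Enorm β μ h = ⨆ m, expWeight β μ m * ‖h m‖`. -/
noncomputable def expWeight (β μ m : ℝ) : ℝ := (1 + |m|) ^ μ * Real.exp (β * |m|)

section Weight

variable {β p q s A y : ℝ} {φ : ℝ → ℂ}

lemma expWeight_pos (β μ m : ℝ) : 0 < expWeight β μ m := by
  unfold expWeight; positivity

lemma expWeight_eq_rpow_mul (β μ ν m : ℝ) :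
    expWeight β μ m = (1 + |m|) ^ (μ - ν) * expWeight β ν m := by
  rw [expWeight, expWeight, ← mul_assoc, ← rpow_add (by positivity), sub_add_cancel]

lemma nonneg_of_expWeight_mul_norm_le (h : expWeight β p y * ‖φ y‖ ≤ A) : 0 ≤ A :=
  (mul_nonneg (expWeight_pos _ _ _).le (norm_nonneg _)).trans h

lemma norm_le_of_expWeight_mul_norm_le (h : expWeight β p y * ‖φ y‖ ≤ A) :
    ‖φ y‖ ≤ A * ((1 + |y|) ^ (-p) * Real.exp (-(β * |y|))) := by
  have hinv : (expWeight β p y)⁻¹ = (1 + |y|) ^ (-p) * Real.exp (-(β * |y|)) := by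
    rw [expWeight, mul_inv, rpow_neg (by positivity), Real.exp_neg]
  rw [← hinv, ← div_eq_mul_inv, le_div_iff₀ (expWeight_pos _ _ _), mul_comm]
  exact h

lemma norm_le_mul_rpow_neg_of_expWeight_mul_norm_le (hβ : 0 ≤ β)
    (h : expWeight β p y * ‖φ y‖ ≤ A) : ‖φ y‖ ≤ A * (1 + |y|) ^ (-p) := by
  refine (norm_le_of_expWeight_mul_norm_le h).trans ?_
  have hA := nonneg_of_expWeight_mul_norm_le h
  gcongr
  exact mul_le_of_le_one_right (by positivity) (Real.exp_le_one_iff.mpr (by simp; positivity))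

lemma one_add_abs_rpow_neg_le_of_half_le {m : ℝ} (hs : 0 ≤ s) (hsp : s ≤ p)
    (hy : |m| / 2 ≤ |y|) : (1 + |y|) ^ (-p) ≤ 2 ^ s * (1 + |m|) ^ (-s) :=
  calc (1 + |y|) ^ (-p) ≤ (1 + |y|) ^ (-s) :=
        rpow_le_rpow_of_exponent_le (by simp) (neg_le_neg hsp)
    _ ≤ ((1 + |m|) / 2) ^ (-s) :=
        rpow_le_rpow_of_nonpos (by positivity) (by linarith) (neg_nonpos.mpr hs)
    _ = 2 ^ s * (1 + |m|) ^ (-s) := by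
        rw [div_rpow (by positivity) zero_le_two, rpow_neg zero_le_two, div_inv_eq_mul, mul_comm]

/-- One of `|m - x|`, `|x|` is at least `|m| / 2`. -/
lemma one_add_abs_sub_rpow_neg_mul_le (hp : 0 ≤ p) (hq : 0 ≤ q) (m x : ℝ) :
    (1 + |m - x|) ^ (-p) * (1 + |x|) ^ (-q) ≤
      2 ^ min p q * (1 + |m|) ^ (-min p q) * ((1 + |x|) ^ (-q) + (1 + |m - x|) ^ (-p)) := by
  have hs : 0 ≤ min p q := le_min hp hq
  have hx : 0 ≤ (1 + |x|) ^ (-q) := by positivity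
  have hmx : 0 ≤ (1 + |m - x|) ^ (-p) := by positivity
  rcases le_total (|m| / 2) (|m - x|) with h | h
  · have := one_add_abs_rpow_neg_le_of_half_le hs (min_le_left p q) h
    nlinarith
  · have h' : |m| / 2 ≤ |x| := by linarith [abs_sub_abs_le_abs_sub m x]
    have := one_add_abs_rpow_neg_le_of_half_le hs (min_le_right p q) h'
    nlinarith

lemma integrable_one_add_abs_rpow_neg (hp : 1 < p) :
    Integrable fun x : ℝ => (1 + |x|) ^ (-p) := by
  simpa using integrable_one_add_norm (E := ℝ) (μ := volume) (r := p) (by simpa using hp)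

lemma exists_integral_one_add_abs_sub_rpow_neg_mul_le (hp : 1 < p) (hq : 1 < q) :
    ∃ K > 0, ∀ m : ℝ, Integrable (fun x => (1 + |m - x|) ^ (-p) * (1 + |x|) ^ (-q)) ∧
      ∫ x, (1 + |m - x|) ^ (-p) * (1 + |x|) ^ (-q) ≤ K * (1 + |m|) ^ (-min p q) := by
  set s := min p q
  set I := fun r : ℝ => ∫ x : ℝ, (1 + |x|) ^ (-r)
  have hI : ∀ r, 0 ≤ I r := fun r => integral_nonneg fun x => by positivity
  refine ⟨2 ^ s * (I q + I p) + 1, by positivity, fun m => ?_⟩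
  have hshift : Integrable fun x : ℝ => (1 + |m - x|) ^ (-p) := by
    simpa using (integrable_one_add_abs_rpow_neg hp).comp_sub_left m
  have hdom : Integrable fun x : ℝ =>
      2 ^ s * (1 + |m|) ^ (-s) * ((1 + |x|) ^ (-q) + (1 + |m - x|) ^ (-p)) :=
    ((integrable_one_add_abs_rpow_neg hq).add hshift).const_mul _
  have hle := one_add_abs_sub_rpow_neg_mul_le (p := p) (q := q) (by linarith) (by linarith) m
  have hint : Integrable fun x => (1 + |m - x|) ^ (-p) * (1 + |x|) ^ (-q) :=
    hdom.mono' (by fun_prop) (Eventually.of_forall fun x => by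
      rw [Real.norm_eq_abs, abs_of_nonneg (by positivity)]; exact hle x)
  refine ⟨hint, ?_⟩
  calc ∫ x, (1 + |m - x|) ^ (-p) * (1 + |x|) ^ (-q)
      ≤ ∫ x, 2 ^ s * (1 + |m|) ^ (-s) * ((1 + |x|) ^ (-q) + (1 + |m - x|) ^ (-p)) :=
        integral_mono hint hdom hle
    _ = 2 ^ s * (I q + I p) * (1 + |m|) ^ (-s) := by
        rw [integral_const_mul, integral_add (integrable_one_add_abs_rpow_neg hq) hshift,
          integral_sub_left_eq_self (fun x => (1 + |x|) ^ (-p))]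
        ring
    _ ≤ (2 ^ s * (I q + I p) + 1) * (1 + |m|) ^ (-s) := by
        gcongr; linarith

end Weight

section Convolution

open ContinuousLinearMap

variable {β p q A B : ℝ} {φ ψ : ℝ → ℂ}

lemma continuous_convolution_of_expWeight_mul_norm_le (hβ : 0 ≤ β) (hp : 0 ≤ p) (hq : 1 < q)
    (hφc : Continuous φ) (hψc : Continuous ψ) (hφ : ∀ y, expWeight β p y * ‖φ y‖ ≤ A)
    (hψ : ∀ y, expWeight β q y * ‖ψ y‖ ≤ B) :
    Continuous (φ ⋆[mul ℂ ℂ] ψ) := by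
  have hφA : ∀ y, ‖φ y‖ ≤ A := fun y => by
    have hA := nonneg_of_expWeight_mul_norm_le (hφ y)
    refine (norm_le_mul_rpow_neg_of_expWeight_mul_norm_le hβ (hφ y)).trans ?_
    exact mul_le_of_le_one_right hA (rpow_le_one_of_one_le_of_nonpos (by simp) (by linarith))
  have hψint : Integrable ψ :=
    ((integrable_one_add_abs_rpow_neg hq).const_mul B).mono' hψc.aestronglyMeasurable
      (Eventually.of_forall fun y => norm_le_mul_rpow_neg_of_expWeight_mul_norm_le hβ (hψ y))
  exact BddAbove.continuous_convolution_left_of_integrable _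
    ⟨A, Set.forall_mem_range.mpr hφA⟩ hφc hψint

lemma expWeight_mul_norm_convolution_le (hβ : 0 ≤ β) {K : ℝ}
    (hK : ∀ m : ℝ, Integrable (fun x => (1 + |m - x|) ^ (-p) * (1 + |x|) ^ (-q)) ∧
      ∫ x, (1 + |m - x|) ^ (-p) * (1 + |x|) ^ (-q) ≤ K * (1 + |m|) ^ (-min p q))
    (hφ : ∀ y, expWeight β p y * ‖φ y‖ ≤ A) (hψ : ∀ y, expWeight β q y * ‖ψ y‖ ≤ B) (m : ℝ) :
    expWeight β (min p q) m * ‖(φ ⋆[mul ℂ ℂ] ψ) m‖ ≤ A * B * K := by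
  have hA := nonneg_of_expWeight_mul_norm_le (hφ 0)
  have hB := nonneg_of_expWeight_mul_norm_le (hψ 0)
  have hexp : ∀ x, Real.exp (-(β * |m - x|)) * Real.exp (-(β * |x|)) ≤ Real.exp (-(β * |m|)) :=
    fun x => by
      rw [← Real.exp_add, Real.exp_le_exp]
      nlinarith [abs_sub_abs_le_abs_sub m x, abs_nonneg (m - x), abs_nonneg x]
  have hpt : ∀ x, ‖φ (m - x) * ψ x‖ ≤
      A * B * Real.exp (-(β * |m|)) * ((1 + |m - x|) ^ (-p) * (1 + |x|) ^ (-q)) := fun x =>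
    calc ‖φ (m - x) * ψ x‖
        ≤ A * ((1 + |m - x|) ^ (-p) * Real.exp (-(β * |m - x|))) *
          (B * ((1 + |x|) ^ (-q) * Real.exp (-(β * |x|)))) := by
          rw [norm_mul]
          exact mul_le_mul (norm_le_of_expWeight_mul_norm_le (hφ _))
            (norm_le_of_expWeight_mul_norm_le (hψ _)) (norm_nonneg _) (by positivity)
      _ = A * B * (Real.exp (-(β * |m - x|)) * Real.exp (-(β * |x|))) *
          ((1 + |m - x|) ^ (-p) * (1 + |x|) ^ (-q)) := by ring
      _ ≤ _ := by gcongr; exact hexp x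
  have hnorm : ‖(φ ⋆[mul ℂ ℂ] ψ) m‖ ≤
      A * B * Real.exp (-(β * |m|)) * (K * (1 + |m|) ^ (-min p q)) := by
    rw [convolution_mul_swap]
    calc ‖∫ x, φ (m - x) * ψ x‖
        ≤ ∫ x, A * B * Real.exp (-(β * |m|)) * ((1 + |m - x|) ^ (-p) * (1 + |x|) ^ (-q)) :=
          norm_integral_le_of_norm_le ((hK m).1.const_mul _) (Eventually.of_forall hpt)
      _ ≤ _ := by rw [integral_const_mul]; gcongr; exact (hK m).2
  calc expWeight β (min p q) m * ‖(φ ⋆[mul ℂ ℂ] ψ) m‖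
      ≤ expWeight β (min p q) m *
          (A * B * Real.exp (-(β * |m|)) * (K * (1 + |m|) ^ (-min p q))) :=
        mul_le_mul_of_nonneg_left hnorm (expWeight_pos _ _ _).le
    _ = A * B * K := by
        rw [expWeight, rpow_neg (by positivity), Real.exp_neg]
        field_simp

end Convolution

section WeightedSpace

variable {β μ : ℝ}

lemma memE.expWeight_mul_norm_le {f : ℝ → ℂ} (hf : memE β μ f) (y : ℝ) :
    expWeight β μ y * ‖f y‖ ≤ Enorm β μ f :=
  le_ciSup hf.2 y

lemma memE_and_Enorm_le {C : ℝ} {h : ℝ → ℂ} (hc : Continuous h)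
    (hle : ∀ m, expWeight β μ m * ‖h m‖ ≤ C) : memE β μ h ∧ Enorm β μ h ≤ C :=
  ⟨⟨hc, C, Set.forall_mem_range.mpr hle⟩, ciSup_le hle⟩

lemma expWeight_mul_norm_mul_le {c d N : ℝ} {Q f : ℝ → ℂ}
    (hQ : ∀ y, ‖Q y‖ ≤ c * (1 + |y|) ^ d) (hf : ∀ y, expWeight β μ y * ‖f y‖ ≤ N) (y : ℝ) :
    expWeight β (μ - d) y * ‖Q y * f y‖ ≤ c * N := by
  have hc : 0 ≤ c := nonneg_of_mul_nonneg_left ((norm_nonneg _).trans (hQ 0)) (by positivity)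
  calc expWeight β (μ - d) y * ‖Q y * f y‖
      ≤ expWeight β (μ - d) y * (c * (1 + |y|) ^ d * ‖f y‖) := by
        rw [norm_mul]; gcongr
        · exact (expWeight_pos _ _ _).le
        · exact hQ y
    _ = c * (expWeight β μ y * ‖f y‖) := by
        rw [expWeight_eq_rpow_mul β μ (μ - d), sub_sub_cancel]; ring
    _ ≤ c * N := by gcongr; exact hf y

lemma expWeight_mul_norm_inv_mul_le {ν n c A : ℝ} {r h : ℝ → ℂ}
    (hr : ∀ m, (1 + |m|) ^ n ≤ c * ‖r m‖) (hν : μ - ν ≤ n)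
    (hh : ∀ m, expWeight β ν m * ‖h m‖ ≤ A) (m : ℝ) :
    expWeight β μ m * ‖(r m)⁻¹ * h m‖ ≤ c * A := by
  have hr₀ : 0 < ‖r m‖ := by
    refine (norm_nonneg _).lt_of_ne fun h₀ => ?_
    have := hr m
    rw [← h₀, mul_zero] at this
    exact this.not_gt (by positivity)
  have hA := nonneg_of_expWeight_mul_norm_le (hh m)
  calc expWeight β μ m * ‖(r m)⁻¹ * h m‖
      = (1 + |m|) ^ (μ - ν) / ‖r m‖ * (expWeight β ν m * ‖h m‖) := by
        rw [expWeight_eq_rpow_mul β μ ν, norm_mul, norm_inv]; ring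
    _ ≤ (1 + |m|) ^ n / ‖r m‖ * A := by
        gcongr
        · exact mul_nonneg (expWeight_pos _ _ _).le (norm_nonneg _)
        · simp
        · exact hh m
    _ ≤ c * A := by
        gcongr
        rw [div_le_iff₀ hr₀]; exact hr m

end WeightedSpace

/-- Proposition 7 of the paper: the weighted convolution with polynomial
kernels maps `E_{(β,μ)} × E_{(β,μ)}` continuously into `E_{(β,μ)}`. -/
theorem polynomial_convolution_bound (β μ : ℝ) (hβ : 0 < β)
    (Q₁ Q₂ R : Polynomial ℂ)
    (hdeg₁ : Q₁.degree ≤ R.degree) (hdeg₂ : Q₂.degree ≤ R.degree)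
    (hR : ∀ m : ℝ, R.eval (Complex.I * (m : ℂ)) ≠ 0)
    (hμ : (max (Q₁.natDegree + 1) (Q₂.natDegree + 1) : ℝ) < μ) :
    ∃ C₅ : ℝ, 0 < C₅ ∧ ∀ f g : ℝ → ℂ, memE β μ f → memE β μ g →
      memE β μ (fun m => (R.eval (Complex.I * (m : ℂ)))⁻¹ *
        ∫ m₁ : ℝ, Q₁.eval (Complex.I * ((m - m₁ : ℝ) : ℂ)) * f (m - m₁) *
          (Q₂.eval (Complex.I * (m₁ : ℂ)) * g m₁)) ∧
      Enorm β μ (fun m => (R.eval (Complex.I * (m : ℂ)))⁻¹ *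
        ∫ m₁ : ℝ, Q₁.eval (Complex.I * ((m - m₁ : ℝ) : ℂ)) * f (m - m₁) *
          (Q₂.eval (Complex.I * (m₁ : ℂ)) * g m₁)) ≤
        C₅ * Enorm β μ f * Enorm β μ g := by
  obtain ⟨c₁, hc₁, hQ₁⟩ := Q₁.exists_norm_eval_I_mul_le
  obtain ⟨c₂, hc₂, hQ₂⟩ := Q₂.exists_norm_eval_I_mul_le
  obtain ⟨cR, hcR, hRlow⟩ := exists_one_add_abs_rpow_le_norm_eval_I_mul hR
  have hp : 1 < μ - Q₁.natDegree := by linarith [(le_max_left _ _).trans_lt hμ]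
  have hq : 1 < μ - Q₂.natDegree := by linarith [(le_max_right _ _).trans_lt hμ]
  have hRdeg : μ - min (μ - Q₁.natDegree) (μ - Q₂.natDegree) ≤ R.natDegree := by
    have h₁ : (Q₁.natDegree : ℝ) ≤ R.natDegree := mod_cast natDegree_le_natDegree hdeg₁
    have h₂ : (Q₂.natDegree : ℝ) ≤ R.natDegree := mod_cast natDegree_le_natDegree hdeg₂
    rw [sub_le_comm]; exact le_min (by linarith) (by linarith)
  obtain ⟨K, hK, hKer⟩ := exists_integral_one_add_abs_sub_rpow_neg_mul_le hp hq
  refine ⟨cR * (c₁ * c₂ * K), by positivity, fun f g hf hg => ?_⟩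
  set φ₁ : ℝ → ℂ := fun y => Q₁.eval (I * y) * f y
  set φ₂ : ℝ → ℂ := fun y => Q₂.eval (I * y) * g y
  have h₁ := expWeight_mul_norm_mul_le hQ₁ hf.expWeight_mul_norm_le
  have h₂ := expWeight_mul_norm_mul_le hQ₂ hg.expWeight_mul_norm_le
  have hconv : (fun m : ℝ => (R.eval (I * (m : ℂ)))⁻¹ *
      ∫ m₁ : ℝ, Q₁.eval (I * ((m - m₁ : ℝ) : ℂ)) * f (m - m₁) *
        (Q₂.eval (I * (m₁ : ℂ)) * g m₁)) =
      fun m : ℝ => (R.eval (I * (m : ℂ)))⁻¹ * (φ₁ ⋆[ContinuousLinearMap.mul ℂ ℂ] φ₂) m := by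
    ext m; rw [convolution_mul_swap]
  have hcont : Continuous (φ₁ ⋆[ContinuousLinearMap.mul ℂ ℂ] φ₂) := by
    have hfc := hf.1
    have hgc := hg.1
    exact continuous_convolution_of_expWeight_mul_norm_le hβ.le (by linarith) hq
      (by fun_prop) (by fun_prop) h₁ h₂
  obtain ⟨hmem, hnorm⟩ := memE_and_Enorm_le ((by fun_prop : Continuous fun m : ℝ =>
      R.eval (I * (m : ℂ))).inv₀ hR |>.mul hcont)
    (expWeight_mul_norm_inv_mul_le hRlow hRdeg
      (expWeight_mul_norm_convolution_le hβ.le hKer h₁ h₂))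
  rw [hconv]
  exact ⟨hmem, hnorm.trans_eq (by ring)⟩
end

section
/- Let f ∈ E_{(β,μ)} with β > 0, μ > 1, and set φ(m) = im·f(m). Then φ ∈ E_{(β,μ−1)}, and on the strip H_β = {|Im z| < β} the derivative of the inverse Fourier transform satisfies ∂_z F⁻¹(f)(z) = F⁻¹(φ)(z), where F⁻¹(g)(z) = (2π)^{−1/2} ∫_{−∞}^{∞} g(m) e^{izm} dm. -/
/-!
Since `μ ≥ 0`, `‖f m‖ ≤ C exp (-β |m|)`. Near a point `z` of the strip, `|Im w| ≤ β - 2δ` for some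
`δ > 0`, so the integrand `f m * exp (i w m)` is dominated by `C exp (-2δ |m|)` and its
`w`-derivative `i m f m * exp (i w m)` by `C δ⁻¹ exp (-δ |m|)`, because `|m| ≤ δ⁻¹ exp (δ |m|)`.
Both bounds are integrable, so the integral can be differentiated under the integral sign.
Multiplying by `m` costs one power of `1 + |m|`, which gives `φ ∈ E_{(β, μ - 1)}`.
-/

open MeasureTheory Real Complex

lemma integrable_exp_neg_mul_abs {c : ℝ} (hc : 0 < c) :
    Integrable fun x : ℝ => rexp (-c * |x|) := by
  rw [← integrableOn_univ, ← Set.Iic_union_Ioi (a := (0 : ℝ)), integrableOn_union]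
  constructor
  · refine (integrableOn_exp_mul_Iic hc 0).congr_fun (fun x hx => ?_) measurableSet_Iic
    rw [abs_of_nonpos hx, neg_mul_neg]
  · refine (integrableOn_exp_mul_Ioi (neg_lt_zero.2 hc) 0).congr_fun (fun x hx => ?_)
      measurableSet_Ioi
    rw [abs_of_pos hx]

lemma abs_mul_exp_neg_mul_abs_le {c : ℝ} (hc : 0 < c) (x : ℝ) :
    |x| * rexp (-c * |x|) ≤ 2 / c * rexp (-(c / 2) * |x|) := by
  have hx : c / 2 * |x| ≤ rexp (c / 2 * |x|) := by
    linarith [add_one_le_exp (c / 2 * |x|)]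
  calc |x| * rexp (-c * |x|) = 2 / c * (c / 2 * |x|) * rexp (-c * |x|) := by
        field_simp
    _ ≤ 2 / c * rexp (c / 2 * |x|) * rexp (-c * |x|) := by gcongr
    _ = 2 / c * rexp (-(c / 2) * |x|) := by
        rw [mul_assoc, ← Real.exp_add]; ring_nf

lemma norm_cexp_I_mul_mul_ofReal_le (w : ℂ) (m : ℝ) :
    ‖cexp (I * w * m)‖ ≤ rexp (|w.im| * |m|) := by
  rw [norm_exp, exp_le_exp]
  have hre : (I * w * m).re = -(w.im * m) := by simp [mul_re]
  rw [hre, ← abs_mul]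
  exact neg_le_abs _

lemma norm_mul_cexp_I_mul_mul_ofReal_le {g : ℝ → ℂ} {b C δ : ℝ}
    (hgC : ∀ m, ‖g m‖ ≤ C * rexp (-b * |m|)) {w : ℂ} (hw : |w.im| ≤ b - δ) (m : ℝ) :
    ‖g m * cexp (I * w * m)‖ ≤ C * rexp (-δ * |m|) := by
  calc ‖g m * cexp (I * w * m)‖ ≤ C * rexp (-b * |m|) * rexp ((b - δ) * |m|) := by
        rw [norm_mul]
        gcongr
        · exact (norm_nonneg _).trans (hgC m)
        · exact hgC m
        · exact (norm_cexp_I_mul_mul_ofReal_le w m).trans (by gcongr)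
    _ = C * rexp (-δ * |m|) := by
        rw [mul_assoc, ← Real.exp_add]; ring_nf

lemma abs_im_lt_of_mem_ball {z w : ℂ} {r : ℝ} (hw : w ∈ Metric.ball z r) :
    |w.im| < |z.im| + r := by
  have := (abs_sub_abs_le_abs_sub w.im z.im).trans (abs_im_le_norm (w - z))
  rw [Metric.mem_ball, Complex.dist_eq] at hw
  linarith

theorem hasDerivAt_integral_mul_cexp {g : ℝ → ℂ} (hg : AEStronglyMeasurable g) {b C : ℝ}
    (hgC : ∀ m, ‖g m‖ ≤ C * rexp (-b * |m|)) {z : ℂ} (hz : |z.im| < b) :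
    HasDerivAt (fun w : ℂ => ∫ m : ℝ, g m * cexp (I * w * m))
      (∫ m : ℝ, I * m * g m * cexp (I * z * m)) z := by
  obtain ⟨δ, hδ, hδb⟩ : ∃ δ > 0, |z.im| + δ = b - δ := ⟨(b - |z.im|) / 2, by linarith, by ring⟩
  have hF_le : ∀ w ∈ Metric.ball z δ, ∀ m : ℝ,
      ‖g m * cexp (I * w * m)‖ ≤ C * rexp (-δ * |m|) := fun w hw m =>
    norm_mul_cexp_I_mul_mul_ofReal_le hgC (by linarith [abs_im_lt_of_mem_ball hw]) m
  have hF_meas : ∀ w : ℂ, AEStronglyMeasurable fun m : ℝ => g m * cexp (I * w * m) :=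
    fun w => hg.mul (by fun_prop : Continuous fun m : ℝ => cexp (I * w * m)).aestronglyMeasurable
  refine (hasDerivAt_integral_of_dominated_loc_of_deriv_le
    (F' := fun w m => I * m * g m * cexp (I * w * m))
    (bound := fun m => C * (2 / δ) * rexp (-(δ / 2) * |m|))
    (Metric.ball_mem_nhds z hδ) (Filter.Eventually.of_forall hF_meas) ?_ ?_ ?_ ?_ ?_).2
  · refine ((integrable_exp_neg_mul_abs hδ).const_mul C).mono' (hF_meas z) ?_
    exact Filter.Eventually.of_forall (hF_le z (Metric.mem_ball_self hδ))
  · have hIm : Continuous fun m : ℝ => I * m := by fun_prop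
    exact (hIm.aestronglyMeasurable.mul (hF_meas z)).congr
      (Filter.Eventually.of_forall fun m => by simp only [Pi.mul_apply]; ring)
  · refine Filter.Eventually.of_forall fun m w hw => ?_
    have hC : 0 ≤ C := by simpa using (norm_nonneg _).trans (hgC 0)
    calc ‖I * m * g m * cexp (I * w * m)‖ = |m| * ‖g m * cexp (I * w * m)‖ := by
          simp only [norm_mul, norm_I, norm_real, Real.norm_eq_abs, one_mul, mul_assoc]
      _ ≤ |m| * (C * rexp (-δ * |m|)) := by gcongr; exact hF_le w hw m
      _ = C * (|m| * rexp (-δ * |m|)) := by ring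
      _ ≤ C * (2 / δ * rexp (-(δ / 2) * |m|)) :=
          mul_le_mul_of_nonneg_left (abs_mul_exp_neg_mul_abs_le hδ m) hC
      _ = C * (2 / δ) * rexp (-(δ / 2) * |m|) := by ring
  · exact (integrable_exp_neg_mul_abs (half_pos hδ)).const_mul _
  · refine Filter.Eventually.of_forall fun m w _ => ?_
    have := (((hasDerivAt_id w).const_mul I).mul_const (m : ℂ)).cexp.const_mul (g m)
    simp only [id, mul_one] at this
    exact this.congr_deriv (by ring)

lemma memE.exists_norm_le {β μ : ℝ} {f : ℝ → ℂ} (hf : memE β μ f) (hμ : 0 ≤ μ) :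
    ∃ C, ∀ m, ‖f m‖ ≤ C * rexp (-β * |m|) := by
  obtain ⟨C, hC⟩ := hf.2
  refine ⟨C, fun m => ?_⟩
  have hpow : 1 ≤ (1 + |m|) ^ μ := one_le_rpow (by linarith [abs_nonneg m]) hμ
  calc ‖f m‖ = rexp (β * |m|) * ‖f m‖ * rexp (-β * |m|) := by
        rw [mul_right_comm, ← Real.exp_add, neg_mul, add_neg_cancel, Real.exp_zero, one_mul]
    _ ≤ (1 + |m|) ^ μ * rexp (β * |m|) * ‖f m‖ * rexp (-β * |m|) := by
        gcongr; exact le_mul_of_one_le_left (by positivity) hpow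
    _ ≤ C * rexp (-β * |m|) := by gcongr; exact hC ⟨m, rfl⟩

lemma memE.I_mul_ofReal_mul {β μ : ℝ} {f : ℝ → ℂ} (hf : memE β μ f) :
    memE β (μ - 1) fun m => I * m * f m := by
  obtain ⟨hcont, C, hC⟩ := hf
  refine ⟨by fun_prop, C, ?_⟩
  rintro _ ⟨m, rfl⟩
  have hpow : (1 + |m|) ^ (μ - 1) * |m| ≤ (1 + |m|) ^ μ := by
    calc (1 + |m|) ^ (μ - 1) * |m| ≤ (1 + |m|) ^ (μ - 1) * (1 + |m|) := by gcongr; linarith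
      _ = (1 + |m|) ^ μ := by rw [← rpow_add_one (by positivity)]; ring_nf
  calc (1 + |m|) ^ (μ - 1) * rexp (β * |m|) * ‖I * m * f m‖
      = (1 + |m|) ^ (μ - 1) * |m| * rexp (β * |m|) * ‖f m‖ := by
        simp only [norm_mul, norm_I, norm_real, Real.norm_eq_abs, one_mul]; ring
    _ ≤ (1 + |m|) ^ μ * rexp (β * |m|) * ‖f m‖ := by gcongr
    _ ≤ C := hC ⟨m, rfl⟩

theorem deriv_inverse_fourier_general (β μ : ℝ) (hμ : 1 < μ)
    (f : ℝ → ℂ) (hf : memE β μ f) :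
    memE β (μ - 1) (fun m => Complex.I * (m : ℂ) * f m) ∧
    ∀ z : ℂ, |z.im| < β →
      HasDerivAt
        (fun w : ℂ => ((Real.sqrt (2 * Real.pi))⁻¹ : ℝ) *
          ∫ m : ℝ, f m * Complex.exp (Complex.I * w * (m : ℂ)))
        (((Real.sqrt (2 * Real.pi))⁻¹ : ℝ) *
          ∫ m : ℝ, (Complex.I * (m : ℂ) * f m) *
            Complex.exp (Complex.I * z * (m : ℂ))) z := by
  obtain ⟨C, hC⟩ := hf.exists_norm_le (by linarith)
  exact ⟨hf.I_mul_ofReal_mul, fun z hz =>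
    (hasDerivAt_integral_mul_cexp hf.1.aestronglyMeasurable hC hz).const_mul _⟩

/-- For `f ∈ E_{(β,μ)}` with `β > 0`, `μ > 1` and `φ(m) = i m f(m)`, one has
`φ ∈ E_{(β,μ−1)}` and `∂_z F⁻¹(f)(z) = F⁻¹(φ)(z)` on the strip `H_β`. -/
theorem deriv_inverse_fourier (β μ : ℝ) (hβ : 0 < β) (hμ : 1 < μ)
    (f : ℝ → ℂ) (hf : memE β μ f) :
    memE β (μ - 1) (fun m => Complex.I * (m : ℂ) * f m) ∧
    ∀ z : ℂ, |z.im| < β →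
      HasDerivAt
        (fun w : ℂ => ((Real.sqrt (2 * Real.pi))⁻¹ : ℝ) *
          ∫ m : ℝ, f m * Complex.exp (Complex.I * w * (m : ℂ)))
        (((Real.sqrt (2 * Real.pi))⁻¹ : ℝ) *
          ∫ m : ℝ, (Complex.I * (m : ℂ) * f m) *
            Complex.exp (Complex.I * z * (m : ℂ))) z :=
  deriv_inverse_fourier_general β μ hμ f hf
end

section
/- Let k ≥ 1 be an integer and ν > 0. There exist constants A₁, A₂ > 0 (depending on ν, k) such that for all n ≥ 1 and all x ≥ 0, ((1+x^{2k})/x) · e^{−ν x^k} · xⁿ/Γ(n/k) ≤ A₁ · A₂ⁿ, uniformly in x > 0. -/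
open Real

/-!
Put `s = n / k` and `j = ⌊n / k⌋ + 3`, so that `n - 1 + 2k ≤ jk` and `j ≤ s + 3`. Then
`(1 + x^{2k}) x^{n-1} ≤ 2 (1 + x^{jk})`, and `y^j e^{-y} ≤ j!` at `y = ν x^k` bounds the
numerator by `2 (1 + ν^{-j} j!)`. Both `1` and `j!` are at most
`Γ(s + 4) = s (s + 1) (s + 2) (s + 3) Γ(s)`, so the quotient is at most `2 (s + 3)^4 (1 + ν^{-j})`,
which grows geometrically in `n`; Stirling's formula is not needed.
-/

open scoped Nat

lemma pow_le_one_add_pow {R : Type*} [Semiring R] [LinearOrder R] [IsStrictOrderedRing R]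
    {x : R} (hx : 0 ≤ x) {m N : ℕ} (h : m ≤ N) : x ^ m ≤ 1 + x ^ N := by
  rcases le_total x 1 with hx1 | hx1
  · exact (pow_le_one₀ hx hx1).trans (le_add_of_nonneg_right (pow_nonneg hx N))
  · exact (pow_le_pow_right₀ hx1 h).trans (le_add_of_nonneg_left zero_le_one)

lemma Nat.add_three_le_four_pow {n : ℕ} (hn : 1 ≤ n) : n + 3 ≤ 4 ^ n := by
  induction n, hn using Nat.le_induction with
  | base => norm_num
  | succ n _ ih => rw [pow_succ]; omega

lemma Nat.add_two_mul_le_div_add_three_mul (n : ℕ) {k : ℕ} (hk : 0 < k) :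
    n + 2 * k ≤ ((n + 1) / k + 3) * k := by
  have := Nat.lt_div_mul_add (a := n + 1) hk
  rw [add_mul]
  omega

lemma add_three_pow_four_mul_one_add_pow_le {s c : ℝ} (hs : 0 ≤ s) (hc : 0 ≤ c) {n j : ℕ}
    (hn : 1 ≤ n) (hsn : s ≤ n) (hjn : j ≤ n + 3) :
    (s + 3) ^ 4 * (1 + c ^ j) ≤ 2 * max 1 c ^ 3 * (256 * max 1 c) ^ n := by
  have hpoly : (s + 3) ^ 4 ≤ 256 ^ n :=
    calc (s + 3) ^ 4 ≤ (4 ^ n) ^ 4 := by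
          gcongr
          have : (n : ℝ) + 3 ≤ 4 ^ n := by exact_mod_cast Nat.add_three_le_four_pow hn
          linarith
      _ = 256 ^ n := by rw [← pow_mul, mul_comm, pow_mul]; norm_num
  have hpow : 1 + c ^ j ≤ 2 * max 1 c ^ (n + 3) := by
    have h1 : c ^ j ≤ max 1 c ^ (n + 3) :=
      (pow_le_pow_left₀ hc (le_max_right _ _) j).trans (pow_le_pow_right₀ (le_max_left _ _) hjn)
    linarith [one_le_pow₀ (n := n + 3) (le_max_left 1 c)]
  calc (s + 3) ^ 4 * (1 + c ^ j) ≤ 256 ^ n * (2 * max 1 c ^ (n + 3)) := by gcongr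
    _ = 2 * max 1 c ^ 3 * (256 * max 1 c) ^ n := by ring

namespace Real

lemma pow_mul_exp_neg_le_factorial {y : ℝ} (hy : 0 ≤ y) (j : ℕ) :
    y ^ j * exp (-y) ≤ j ! := by
  have := pow_div_factorial_le_exp y hy j
  rw [div_le_iff₀ (by positivity)] at this
  rw [exp_neg, ← div_eq_mul_inv, div_le_iff₀ (exp_pos y), mul_comm (j ! : ℝ)]
  exact this

lemma one_add_mul_pow_mul_exp_neg_le {y c : ℝ} (hy : 0 ≤ y) (hc : 0 ≤ c) (j : ℕ) :
    (1 + c * y ^ j) * exp (-y) ≤ 1 + c * j ! :=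
  calc (1 + c * y ^ j) * exp (-y) = exp (-y) + c * (y ^ j * exp (-y)) := by ring
    _ ≤ 1 + c * j ! := by
      gcongr
      · exact exp_le_one_iff.2 (neg_nonpos.2 hy)
      · exact pow_mul_exp_neg_le_factorial hy j

lemma one_add_pow_mul_pow_mul_exp_neg_le {x ν : ℝ} (hx : 0 ≤ x) (hν : 0 < ν) {k m j : ℕ}
    (hj : m + 2 * k ≤ j * k) :
    (1 + x ^ (2 * k)) * x ^ m * exp (-ν * x ^ k) ≤ 2 * (1 + ν⁻¹ ^ j * j !) := by
  have hpow : ν⁻¹ ^ j * (ν * x ^ k) ^ j = x ^ (j * k) := by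
    rw [← mul_pow, inv_mul_cancel_left₀ hν.ne', ← pow_mul, mul_comm]
  have hpoly : (1 + x ^ (2 * k)) * x ^ m ≤ 2 * (1 + ν⁻¹ ^ j * (ν * x ^ k) ^ j) := by
    rw [hpow, add_mul, one_mul, ← pow_add, add_comm (2 * k)]
    linarith [pow_le_one_add_pow hx (show m ≤ j * k by omega), pow_le_one_add_pow hx hj]
  calc (1 + x ^ (2 * k)) * x ^ m * exp (-ν * x ^ k)
      ≤ 2 * ((1 + ν⁻¹ ^ j * (ν * x ^ k) ^ j) * exp (-(ν * x ^ k))) := by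
        rw [neg_mul, ← mul_assoc]; gcongr
    _ ≤ 2 * (1 + ν⁻¹ ^ j * j !) := by
        gcongr
        exact one_add_mul_pow_mul_exp_neg_le (by positivity) (by positivity) j

lemma Gamma_add_four {s : ℝ} (hs : 0 < s) :
    Gamma (s + 4) = s * (s + 1) * (s + 2) * (s + 3) * Gamma s := by
  rw [show s + 4 = s + 3 + 1 by ring, Gamma_add_one (by positivity),
    show s + 3 = s + 2 + 1 by ring, Gamma_add_one (by positivity),
    show s + 2 = s + 1 + 1 by ring, Gamma_add_one (by positivity), Gamma_add_one hs.ne']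
  ring

lemma factorial_le_Gamma {j : ℕ} {t : ℝ} (ht : 2 ≤ t) (hj : (j : ℝ) + 1 ≤ t) :
    (j ! : ℝ) ≤ Gamma t := by
  rw [← Gamma_nat_eq_factorial]
  rcases j.eq_zero_or_pos with rfl | hj0
  · rw [Nat.cast_zero, zero_add, Gamma_one, ← Gamma_two]
    exact Gamma_strictMonoOn_Ici.monotoneOn Set.self_mem_Ici ht ht
  · have h2 : (2 : ℝ) ≤ j + 1 := by
      have : (1 : ℝ) ≤ j := by exact_mod_cast hj0
      linarith
    exact Gamma_strictMonoOn_Ici.monotoneOn h2 (h2.trans hj) hj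

lemma one_add_mul_factorial_div_Gamma_le {s c : ℝ} (hs : 0 < s) (hc : 0 ≤ c) {j : ℕ}
    (hj : (j : ℝ) ≤ s + 3) :
    (1 + c * j !) / Gamma s ≤ (s + 3) ^ 4 * (1 + c) := by
  have hfac : (j ! : ℝ) ≤ Gamma (s + 4) := factorial_le_Gamma (by linarith) (by linarith)
  have hone : (1 : ℝ) ≤ Gamma (s + 4) := by
    simpa using factorial_le_Gamma (j := 0) (t := s + 4) (by linarith) (by simp; linarith)
  have hprod : s * (s + 1) * (s + 2) * (s + 3) ≤ (s + 3) ^ 4 := by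
    calc s * (s + 1) * (s + 2) * (s + 3) ≤ (s + 3) * (s + 3) * (s + 3) * (s + 3) := by
          gcongr <;> linarith
      _ = (s + 3) ^ 4 := by ring
  have hΓ := Gamma_pos_of_pos hs
  rw [div_le_iff₀ hΓ]
  calc 1 + c * j ! ≤ Gamma (s + 4) * (1 + c) := by nlinarith
    _ = s * (s + 1) * (s + 2) * (s + 3) * (1 + c) * Gamma s := by rw [Gamma_add_four hs]; ring
    _ ≤ (s + 3) ^ 4 * (1 + c) * Gamma s := by gcongr

end Real

/-- Key estimate: there are `A₁, A₂ > 0` (depending on `ν, k`) with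
`((1+x^{2k})/x) e^{−νx^k} xⁿ/Γ(n/k) ≤ A₁ A₂ⁿ` for all `n ≥ 1`, `x > 0`. -/
theorem borel_growth_estimate (k : ℕ) (hk : 1 ≤ k) (ν : ℝ) (hν : 0 < ν) :
    ∃ A₁ A₂ : ℝ, 0 < A₁ ∧ 0 < A₂ ∧ ∀ n : ℕ, 1 ≤ n → ∀ x : ℝ, 0 < x →
      (1 + x ^ (2 * k)) / x * Real.exp (-ν * x ^ k) * x ^ n /
          Real.Gamma ((n : ℝ) / k)
        ≤ A₁ * A₂ ^ n := by
  refine ⟨4 * max 1 ν⁻¹ ^ 3, 256 * max 1 ν⁻¹, by positivity, by positivity,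
    fun n hn x hx => ?_⟩
  obtain ⟨m, rfl⟩ : ∃ m, n = m + 1 := ⟨n - 1, by omega⟩
  set s : ℝ := ((m + 1 : ℕ) : ℝ) / k
  set j := (m + 1) / k + 3
  have hs : 0 < s := by positivity
  have hsn : s ≤ ((m + 1 : ℕ) : ℝ) := div_le_self (by positivity) (by exact_mod_cast hk)
  have hjs : (j : ℝ) ≤ s + 3 := by
    simp only [j, Nat.cast_add]
    linarith [Nat.cast_div_le (α := ℝ) (m := m + 1) (n := k)]
  have hjn : j ≤ m + 1 + 3 := by
    have := Nat.div_le_self (m + 1) k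
    omega
  calc (1 + x ^ (2 * k)) / x * exp (-ν * x ^ k) * x ^ (m + 1) / Gamma s
      = (1 + x ^ (2 * k)) * x ^ m * exp (-ν * x ^ k) / Gamma s := by
        field_simp; ring
    _ ≤ 2 * (1 + ν⁻¹ ^ j * j !) / Gamma s := by
        gcongr ?_ / _
        exact one_add_pow_mul_pow_mul_exp_neg_le hx.le hν
          (Nat.add_two_mul_le_div_add_three_mul m hk)
    _ = 2 * ((1 + ν⁻¹ ^ j * j !) / Gamma s) := mul_div_assoc ..
    _ ≤ 2 * ((s + 3) ^ 4 * (1 + ν⁻¹ ^ j)) := by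
        gcongr
        exact one_add_mul_factorial_div_Gamma_le hs (by positivity) hjs
    _ ≤ 2 * (2 * max 1 ν⁻¹ ^ 3 * (256 * max 1 ν⁻¹) ^ (m + 1)) := by
        gcongr 2 * ?_
        exact add_three_pow_four_mul_one_add_pow_le hs.le (inv_nonneg.2 hν.le) hn hsn hjn
    _ = 4 * max 1 ν⁻¹ ^ 3 * (256 * max 1 ν⁻¹) ^ (m + 1) := by ring
end

section
/- Let k ≥ 1 be an integer and γ₂ a real number with 1/k ≤ γ₂ ≤ 1, and ν > 0. Then sup_{x≥0} ((1+x²)/x^{1/k}) e^{−νx} ∫₀ˣ (x−s)^{γ₂} (s^{1/k−1}/(1+s²)) e^{νs} ds < ∞. -/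
open MeasureTheory Real

/-- Scalar estimate behind Proposition 2: for `1/k ≤ γ₂ ≤ 1` and `ν > 0`,
`sup_{x>0} ((1+x²)/x^{1/k}) e^{−νx} ∫₀ˣ (x−s)^{γ₂} (s^{1/k−1}/(1+s²)) e^{νs} ds < ∞`. -/
theorem monomial_operator_scalar_bound (k : ℕ) (hk : 1 ≤ k) (γ₂ ν : ℝ)
    (hγl : (1 : ℝ) / k ≤ γ₂) (hγu : γ₂ ≤ 1) (hν : 0 < ν) :
    ∃ C : ℝ, ∀ x : ℝ, 0 < x →
      ((1 + x ^ 2) / x ^ ((1 : ℝ) / k)) * Real.exp (-ν * x) *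
        ∫ s in Set.Ioo (0 : ℝ) x,
          (x - s) ^ γ₂ * (s ^ ((1 : ℝ) / k - 1) / (1 + s ^ 2)) * Real.exp (ν * s)
      ≤ C := by
  have hkR : (0:ℝ) < (k:ℝ) := by exact_mod_cast Nat.lt_of_lt_of_le Nat.zero_lt_one hk
  set α : ℝ := (1:ℝ)/k with hαdef
  have hα0 : 0 < α := by positivity
  have hα1 : α ≤ 1 := by
    rw [hαdef, div_le_one hkR]
    exact_mod_cast hk
  have hγ0 : 0 < γ₂ := lt_of_lt_of_le hα0 hγl
  -- auxiliary: t * exp(-(c*t)) ≤ 1/c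
  have haux : ∀ c t : ℝ, 0 < c → 0 ≤ t → t * Real.exp (-(c*t)) ≤ 1/c := by
    intro c t hc ht
    have h2 : c*t ≤ Real.exp (c*t) := by
      have := Real.add_one_le_exp (c*t)
      linarith
    rw [Real.exp_neg, ← one_div, mul_one_div, div_le_div_iff₀ (Real.exp_pos _) hc]
    nlinarith
  set M : ℝ := (1 + 2/ν) * (2 + 2*(4/ν)^2) with hMdef
  have hMt : ∀ t : ℝ, 0 ≤ t → (1+t) * (2+2*t^2) * Real.exp (-(ν*t)) ≤ M := by
    intro t ht
    have e1 : (1+t) * Real.exp (-(ν/2*t)) ≤ 1 + 2/ν := by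
      have := haux (ν/2) t (by positivity) ht
      have he : Real.exp (-(ν/2*t)) ≤ 1 := by
        rw [Real.exp_le_one_iff]; nlinarith
      have h2 : (1:ℝ)/(ν/2) = 2/ν := by field_simp
      nlinarith [Real.exp_pos (-(ν/2*t))]
    have e2 : (2+2*t^2) * Real.exp (-(ν/2*t)) ≤ 2 + 2*(4/ν)^2 := by
      have h4 := haux (ν/4) t (by positivity) ht
      have hsq : t^2 * Real.exp (-(ν/2*t)) ≤ (4/ν)^2 := by
        have : t^2 * Real.exp (-(ν/2*t)) = (t * Real.exp (-(ν/4*t)))^2 := by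
          rw [mul_pow, ← Real.exp_nat_mul]
          ring_nf
        rw [this]
        have hnn : 0 ≤ t * Real.exp (-(ν/4*t)) := by positivity
        have h14 : (1:ℝ)/(ν/4) = 4/ν := by field_simp
        rw [h14] at h4
        nlinarith
      have he : Real.exp (-(ν/2*t)) ≤ 1 := by
        rw [Real.exp_le_one_iff]; nlinarith
      nlinarith [Real.exp_pos (-(ν/2*t))]
    have hsplit : Real.exp (-(ν*t)) = Real.exp (-(ν/2*t)) * Real.exp (-(ν/2*t)) := by
      rw [← Real.exp_add]; ring_nf
    rw [hMdef, hsplit]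
    have hnn1 : 0 ≤ (1+t) * Real.exp (-(ν/2*t)) := by positivity
    have hnn2 : 0 ≤ (2+2*t^2) * Real.exp (-(ν/2*t)) := by positivity
    calc (1+t) * (2+2*t^2) * (Real.exp (-(ν/2*t)) * Real.exp (-(ν/2*t)))
        = ((1+t) * Real.exp (-(ν/2*t))) * ((2+2*t^2) * Real.exp (-(ν/2*t))) := by ring
      _ ≤ (1 + 2/ν) * (2 + 2*(4/ν)^2) := by
          apply mul_le_mul e1 e2 hnn2 (by positivity)
  refine ⟨M * k, fun x hx => ?_⟩
  have h1x : (0:ℝ) < 1 + x^2 := by positivity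
  have hxα : (0:ℝ) < x ^ α := Real.rpow_pos_of_pos hx α
  -- integrability of s^(α-1) on Ioo 0 x
  have hm1 : (-1:ℝ) < α - 1 := by linarith
  have hintg : IntegrableOn (fun s : ℝ => s ^ (α-1)) (Set.Ioo 0 x) := by
    have h := intervalIntegral.intervalIntegrable_rpow' (a := (0:ℝ)) (b := x) hm1
    rw [intervalIntegrable_iff_integrableOn_Ioc_of_le hx.le] at h
    exact h.mono_set Set.Ioo_subset_Ioc_self
  -- value of the integral
  have hint : ∫ s in Set.Ioo (0:ℝ) x, s ^ (α-1) = x ^ α / α := by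
    rw [MeasureTheory.setIntegral_congr_set MeasureTheory.Ioo_ae_eq_Ioc,
      ← intervalIntegral.integral_of_le hx.le,
      integral_rpow (Or.inl hm1)]
    rw [Real.zero_rpow (by linarith : α - 1 + 1 ≠ 0)]
    ring_nf
  -- pointwise bound and integral monotonicity
  have hmono : (∫ s in Set.Ioo (0 : ℝ) x,
        (x - s) ^ γ₂ * (s ^ (α - 1) / (1 + s ^ 2)) * Real.exp (ν * s))
      ≤ ∫ s in Set.Ioo (0:ℝ) x, (M * Real.exp (ν*x) / (1+x^2)) * s ^ (α-1) := by
    apply MeasureTheory.integral_mono_of_nonneg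
    · filter_upwards [ae_restrict_mem measurableSet_Ioo] with s hs
      have hs0 : 0 < s := hs.1
      have hst : 0 < x - s := by linarith [hs.2]
      positivity
    · exact hintg.const_mul _
    · filter_upwards [ae_restrict_mem measurableSet_Ioo] with s hs
      have hs0 : 0 < s := hs.1
      set t : ℝ := x - s with htdef
      have ht : 0 < t := by simp only [htdef]; linarith [hs.2]
      have h1s : (0:ℝ) < 1 + s^2 := by positivity
      have hsα : (0:ℝ) ≤ s ^ (α-1) := by positivity
      -- t^γ₂ ≤ 1 + t
      have htp : t ^ γ₂ ≤ 1 + t := by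
        rcases le_total t 1 with h | h
        · have := Real.rpow_le_one ht.le h hγ0.le
          linarith
        · have := Real.rpow_le_rpow_of_exponent_le h hγu
          rw [Real.rpow_one] at this
          linarith
      have hx2 : 1 + x^2 ≤ (1+s^2) * (2+2*t^2) := by
        have hxst : x = s + t := by simp [htdef]
        nlinarith [sq_nonneg (s - t), sq_nonneg (s*t)]
      have hexp : Real.exp (ν*s) = Real.exp (ν*x) * Real.exp (-(ν*t)) := by
        rw [← Real.exp_add]; congr 1; simp [htdef]; ring
      have key : t ^ γ₂ * (1+x^2) * Real.exp (ν*s) ≤ M * ((1+s^2) * Real.exp (ν*x)) := by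
        rw [hexp]
        calc t ^ γ₂ * (1+x^2) * (Real.exp (ν*x) * Real.exp (-(ν*t)))
            ≤ (1+t) * ((1+s^2)*(2+2*t^2)) * (Real.exp (ν*x) * Real.exp (-(ν*t))) := by
              apply mul_le_mul (mul_le_mul htp hx2 h1x.le (by linarith)) le_rfl
                (by positivity) (by positivity)
          _ = ((1+t)*(2+2*t^2)*Real.exp (-(ν*t))) * ((1+s^2)*Real.exp (ν*x)) := by ring
          _ ≤ M * ((1+s^2)*Real.exp (ν*x)) := by
              apply mul_le_mul_of_nonneg_right (hMt t ht.le) (by positivity)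
      calc t ^ γ₂ * (s ^ (α-1) / (1+s^2)) * Real.exp (ν*s)
          = (t ^ γ₂ * (1+x^2) * Real.exp (ν*s)) * s ^ (α-1) / ((1+s^2)*(1+x^2)) := by
            field_simp
        _ ≤ (M * ((1+s^2) * Real.exp (ν*x))) * s ^ (α-1) / ((1+s^2)*(1+x^2)) := by
            gcongr
        _ = M * Real.exp (ν*x) / (1+x^2) * s ^ (α-1) := by
            field_simp
  have hintval : ∫ s in Set.Ioo (0:ℝ) x, (M * Real.exp (ν*x) / (1+x^2)) * s ^ (α-1)
      = M * Real.exp (ν*x) / (1+x^2) * (x ^ α / α) := by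
    rw [MeasureTheory.integral_const_mul, hint]
  have hfac : (0:ℝ) ≤ (1 + x ^ 2) / x ^ α * Real.exp (-ν * x) := by positivity
  calc ((1 + x ^ 2) / x ^ α) * Real.exp (-ν * x) *
        ∫ s in Set.Ioo (0 : ℝ) x,
          (x - s) ^ γ₂ * (s ^ (α - 1) / (1 + s ^ 2)) * Real.exp (ν * s)
      ≤ ((1 + x ^ 2) / x ^ α) * Real.exp (-ν * x) *
          (M * Real.exp (ν*x) / (1+x^2) * (x ^ α / α)) := by
        rw [← hintval]
        exact mul_le_mul_of_nonneg_left hmono hfac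
    _ = M * ((1:ℝ)/α) := by
        have hee : Real.exp (-ν * x) * Real.exp (ν*x) = 1 := by
          rw [← Real.exp_add]; ring_nf; exact Real.exp_zero
        have h1 : x ^ α ≠ 0 := ne_of_gt hxα
        have h2 : (1+x^2) ≠ 0 := ne_of_gt h1x
        calc ((1 + x ^ 2) / x ^ α) * Real.exp (-ν * x) *
              (M * Real.exp (ν*x) / (1+x^2) * (x ^ α / α))
            = M * ((1:ℝ)/α) * ((1+x^2)/(1+x^2)) * (x ^ α / x ^ α) *
                (Real.exp (-ν * x) * Real.exp (ν*x)) := by ring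
          _ = M * ((1:ℝ)/α) := by rw [div_self h2, div_self h1, hee]; ring
    _ = M * k := by
        rw [hαdef]
        rw [one_div_one_div]
end
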